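/- Let q be a pure unit quaternion, let x and y be unit quaternions, and let F(y) = {y·(r + s·q) : r, s ∈ ℝ, r² + s² = 1} be the right q-fiber through y. Then for all l, m ∈ ℝ with l² + m² = 1, the infimum distance (with respect to the norm on ℍ) from x·(l + m·q) to the set F(y) equals the infimum distance from x to F(y). (There is a well-defined distance between two right q-fibers: the distance from a point on one fiber to the other fiber does not depend on the chosen point.) -/

import Mathlib

/-!
For a pure unit quaternion `q` we have `q * q = -1`, so `u = l + m q` with `l² + m² = 1` is a
unit quaternion and the circle `{r + s q : r² + s² = 1}` is closed under multiplication by it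
(the product of `r + s q` and `l + m q` is the rotated point `(rl - sm) + (rm + sl) q`). Hence
right multiplication by `u` is an isometry of `ℍ` mapping the right `q`-fiber through `y` onto
itself, and isometries preserve the distance from a point to a set.
-/

open Quaternion

theorem Metric.infDist_mul_right_of_image_eq {R : Type*} [SeminormedRing R] [NormMulClass R]
    {u : R} (hu : ‖u‖ = 1) {F : Set R} (hF : (· * u) '' F = F) (x : R) :
    Metric.infDist (x * u) F = Metric.infDist x F := by
  have hiso : Isometry (· * u) := Isometry.of_dist_eq fun a b => by
    rw [dist_eq_norm, dist_eq_norm, ← sub_mul, norm_mul, hu, mul_one]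
  conv_lhs => rw [← hF]
  exact Metric.infDist_image hiso

namespace Quaternion

theorem mul_self_eq_neg_one {q : ℍ[ℝ]} (hre : q.re = 0) (hnorm : ‖q‖ = 1) : q * q = -1 := by
  rw [← sq, sq_eq_neg_normSq.mpr hre, normSq_eq_norm_mul_self, hnorm, mul_one, coe_one]

theorem coe_add_coe_mul_mul_coe_add_coe_mul {q : ℍ[ℝ]} (hq : q * q = -1) (a b c d : ℝ) :
    ((a : ℍ[ℝ]) + b * q) * (c + d * q) =
      ((a * c - b * d : ℝ) : ℍ[ℝ]) + ((a * d + b * c : ℝ) : ℍ[ℝ]) * q := by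
  simp only [← algebraMap_def, Algebra.algebraMap_eq_smul_one, add_mul, mul_add,
    smul_mul_assoc, mul_smul_comm, one_mul, mul_one, hq]
  module

theorem norm_coe_add_coe_mul {q : ℍ[ℝ]} (hre : q.re = 0) (hnorm : ‖q‖ = 1) (r s : ℝ) :
    ‖(r : ℍ[ℝ]) + (s : ℍ[ℝ]) * q‖ = √(r ^ 2 + s ^ 2) := by
  have hstar : star ((r : ℍ[ℝ]) + (s : ℍ[ℝ]) * q) = r + ((-s : ℝ) : ℍ[ℝ]) * q := by
    rw [star_add, star_mul, star_coe, star_coe, star_eq_neg.mpr hre, coe_neg, neg_mul, ← mul_neg,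
      ← coe_neg, coe_commutes]
  have hnormSq : normSq ((r : ℍ[ℝ]) + (s : ℍ[ℝ]) * q) = r ^ 2 + s ^ 2 := by
    apply coe_injective
    rw [← self_mul_star, hstar, coe_add_coe_mul_mul_coe_add_coe_mul (mul_self_eq_neg_one hre hnorm),
      show r * -s + s * r = 0 by ring, coe_zero, zero_mul, add_zero]
    ring_nf
  rw [← hnormSq, normSq_eq_norm_mul_self, Real.sqrt_mul_self (norm_nonneg _)]

def rightFiber (q y : ℍ[ℝ]) : Set ℍ[ℝ] :=
  {z | ∃ r s : ℝ, r ^ 2 + s ^ 2 = 1 ∧ z = y * ((r : ℍ[ℝ]) + (s : ℍ[ℝ]) * q)}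

theorem image_mul_right_rightFiber {q : ℍ[ℝ]} (hq : q * q = -1) (y : ℍ[ℝ]) {l m : ℝ}
    (hlm : l ^ 2 + m ^ 2 = 1) :
    (· * ((l : ℍ[ℝ]) + (m : ℍ[ℝ]) * q)) '' rightFiber q y = rightFiber q y := by
  apply Set.Subset.antisymm
  · rintro _ ⟨_, ⟨r, s, hrs, rfl⟩, rfl⟩
    refine ⟨r * l - s * m, r * m + s * l, by linear_combination (r ^ 2 + s ^ 2) * hlm + hrs, ?_⟩
    dsimp only
    rw [mul_assoc, coe_add_coe_mul_mul_coe_add_coe_mul hq]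
  · rintro _ ⟨r, s, hrs, rfl⟩
    refine ⟨y * (((r * l + s * m : ℝ) : ℍ[ℝ]) + ((s * l - r * m : ℝ) : ℍ[ℝ]) * q),
      ⟨r * l + s * m, s * l - r * m, by linear_combination (r ^ 2 + s ^ 2) * hlm + hrs, rfl⟩, ?_⟩
    dsimp only
    rw [mul_assoc, coe_add_coe_mul_mul_coe_add_coe_mul hq,
      show (r * l + s * m) * l - (s * l - r * m) * m = r by linear_combination r * hlm,
      show (r * l + s * m) * m + (s * l - r * m) * l = s by linear_combination s * hlm]

end Quaternion

theorem infDist_to_right_fiber_well_defined_general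
    (q : ℍ[ℝ]) (hqre : q.re = 0) (hqnorm : ‖q‖ = 1)
    (x y : ℍ[ℝ])
    (l m : ℝ) (hlm : l ^ 2 + m ^ 2 = 1) :
    Metric.infDist (x * ((l : ℍ[ℝ]) + (m : ℍ[ℝ]) * q))
        {z : ℍ[ℝ] | ∃ r s : ℝ, r ^ 2 + s ^ 2 = 1 ∧ z = y * ((r : ℍ[ℝ]) + (s : ℍ[ℝ]) * q)} =
      Metric.infDist x
        {z : ℍ[ℝ] | ∃ r s : ℝ, r ^ 2 + s ^ 2 = 1 ∧ z = y * ((r : ℍ[ℝ]) + (s : ℍ[ℝ]) * q)} := by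
  have hu : ‖(l : ℍ[ℝ]) + (m : ℍ[ℝ]) * q‖ = 1 := by
    rw [norm_coe_add_coe_mul hqre hqnorm, hlm, Real.sqrt_one]
  exact Metric.infDist_mul_right_of_image_eq hu
    (image_mul_right_rightFiber (mul_self_eq_neg_one hqre hqnorm) y hlm) x

/-- There is a well-defined distance between two right `q`-fibers: the infimum distance
from a point `x * (l + m·q)` of the right `q`-fiber through `x` to the right `q`-fiber
through `y` does not depend on the chosen point of the fiber through `x`. -/
theorem infDist_to_right_fiber_well_defined
    (q : ℍ[ℝ]) (hqre : q.re = 0) (hqnorm : ‖q‖ = 1)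
    (x y : ℍ[ℝ]) (hx : ‖x‖ = 1) (hy : ‖y‖ = 1)
    (l m : ℝ) (hlm : l ^ 2 + m ^ 2 = 1) :
    Metric.infDist (x * ((l : ℍ[ℝ]) + (m : ℍ[ℝ]) * q))
        {z : ℍ[ℝ] | ∃ r s : ℝ, r ^ 2 + s ^ 2 = 1 ∧ z = y * ((r : ℍ[ℝ]) + (s : ℍ[ℝ]) * q)} =
      Metric.infDist x
        {z : ℍ[ℝ] | ∃ r s : ℝ, r ^ 2 + s ^ 2 = 1 ∧ z = y * ((r : ℍ[ℝ]) + (s : ℍ[ℝ]) * q)} :=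
  infDist_to_right_fiber_well_defined_general q hqre hqnorm x y l m hlm
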